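/- Let R ⊆ ℤ² be a finite simply connected region and let h be a hall of R, with u and u' its two neighbors in R. Then h is an articulation point of R: there is no path in the subgraph induced on R \ {h} from u to u'; equivalently, u and u' lie in different connected components of R \ {h}, so deleting h disconnects R. -/

import Mathlib

/-- The grid graph on ℤ²: two vertices are adjacent iff their Manhattan distance is 1. -/
def gridGraph : SimpleGraph (ℤ × ℤ) where
  Adj a b := (a.1 - b.1).natAbs + (a.2 - b.2).natAbs = 1
  symm := ⟨by intro a b h; first | omega | (beta_reduce at *; omega)⟩
  loopless := ⟨by intro a h; first | omega | (beta_reduce at *; omega)⟩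

/-- The set of neighbors of `v` (in the grid graph) lying in `R`. -/
def nbrsIn (R : Set (ℤ × ℤ)) (v : ℤ × ℤ) : Set (ℤ × ℤ) :=
  {u | u ∈ R ∧ gridGraph.Adj v u}

/-- `R` is simply connected: both `R` and its complement induce connected subgraphs. -/
def SimplyConnected (R : Set (ℤ × ℤ)) : Prop :=
  (gridGraph.induce R).Connected ∧ (gridGraph.induce Rᶜ).Connected

/-- `v` is a corner of `R`: either it has at most one neighbor in `R`, or it has exactly
two neighbors `u, u'` in `R` and they have a common grid-neighbor `w ∈ R` distinct from `v`. -/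
def IsGridCorner (R : Set (ℤ × ℤ)) (v : ℤ × ℤ) : Prop :=
  v ∈ R ∧
    ((nbrsIn R v).ncard ≤ 1 ∨
      ∃ u u' : ℤ × ℤ, u ≠ u' ∧ nbrsIn R v = {u, u'} ∧
        ∃ w : ℤ × ℤ, w ∈ R ∧ w ≠ v ∧ gridGraph.Adj u w ∧ gridGraph.Adj u' w)

/-!
Suppose a walk in `R \ {h}` joins `u` to `u'`. Closing it up through `h` gives a closed walk
`γ` in `R` that traverses the edge `{h, u}` exactly once. The parity of the winding number of
`γ` around a unit cell changes, across a grid edge, by the parity of the number of traversals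
of that edge. Hence it is constant along paths in `Rᶜ`, and since `Rᶜ` is connected and reaches
the cells far to the right of the finite set `R`, it vanishes on every cell with a corner
outside `R`. Both cells on either side of `{h, u}` have such a corner (the common neighbour `w`
of `u` and `u'` for one, a neighbour of `h` other than `u`, `u'` for the other), yet their
parities differ by one.
-/

namespace SimpleGraph

lemma Walk.count_edges_eq_zero_of_notMem_support {V : Type*} [DecidableEq V] {G : SimpleGraph V}
    {x y v : V} (p : G.Walk x y) {e : Sym2 V} (hve : v ∈ e) (hv : v ∉ p.support) :
    p.edges.count e = 0 :=
  List.count_eq_zero.mpr fun he => hv (p.mem_support_of_mem_edges he hve)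

lemma Reachable.exists_walk_of_induce {V : Type*} {G : SimpleGraph V} {S : Set V}
    {a b : S} (hab : (G.induce S).Reachable a b) :
    ∃ p : G.Walk a b, ∀ v ∈ p.support, v ∈ S := by
  obtain ⟨q⟩ := hab
  induction q with
  | nil => exact ⟨Walk.nil, by simp⟩
  | @cons x _ _ hadj _ ih =>
    obtain ⟨p, hp⟩ := ih
    refine ⟨Walk.cons hadj p, fun v hv => ?_⟩
    rcases List.mem_cons.mp hv with rfl | hv
    exacts [x.2, hp v hv]

lemma Walk.count_edges_cons_concat {V : Type*} [DecidableEq V] {G : SimpleGraph V}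
    {h u u' : V} (hu : G.Adj h u) (hu' : G.Adj u' h) (q : G.Walk u u') (hq : h ∉ q.support)
    (hne : u ≠ u') : (Walk.cons hu (q.concat hu')).edges.count s(h, u) = 1 := by
  have hu'h : u' ≠ h := fun e => hq (e ▸ q.end_mem_support)
  simp [q.count_edges_eq_zero_of_notMem_support (Sym2.mem_mk_left h u) hq, hu'h, hne.symm]

end SimpleGraph

namespace GridWinding

open SimpleGraph

lemma gridGraph_adj {a b : ℤ × ℤ} :
    gridGraph.Adj a b ↔ (a.1 - b.1).natAbs + (a.2 - b.2).natAbs = 1 :=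
  Iff.rfl

/-- Parity of the number of crossings of the step `a → b` with the horizontal ray running to
the right from the centre of the unit cell whose lower-left corner is `c`. -/
def rayCrossing (c a b : ℤ × ℤ) : ZMod 2 :=
  if c.1 < a.1 ∧ a.1 = b.1 ∧ (a.2 = c.2 ∧ b.2 = c.2 + 1 ∨ a.2 = c.2 + 1 ∧ b.2 = c.2) then 1
  else 0

def winding {x y : ℤ × ℤ} (p : gridGraph.Walk x y) (c : ℤ × ℤ) : ZMod 2 :=
  (p.darts.map fun d => rayCrossing c d.fst d.snd).sum

@[simp] lemma winding_nil {x : ℤ × ℤ} (c : ℤ × ℤ) :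
    winding (Walk.nil : gridGraph.Walk x x) c = 0 :=
  rfl

@[simp] lemma winding_cons {x y z : ℤ × ℤ} (hxy : gridGraph.Adj x y) (p : gridGraph.Walk y z)
    (c : ℤ × ℤ) : winding (Walk.cons hxy p) c = rayCrossing c x y + winding p c := by
  simp [winding]

lemma rayCrossing_left_add_rayCrossing (a b c : ℤ × ℤ) :
    rayCrossing (c.1 - 1, c.2) a b + rayCrossing c a b =
      if s(a, b) = s(c, (c.1, c.2 + 1)) then 1 else 0 := by
  simp only [rayCrossing, Sym2.eq_iff, Prod.ext_iff]
  split_ifs <;> first | rfl | decide | omega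

lemma rayCrossing_below_add_rayCrossing {a b : ℤ × ℤ} (hab : gridGraph.Adj a b) (c : ℤ × ℤ) :
    rayCrossing (c.1, c.2 - 1) a b + rayCrossing c a b =
      (if s(a, b) = s(c, (c.1 + 1, c.2)) then 1 else 0) +
        ((if b.2 = c.2 ∧ c.1 < b.1 then 1 else 0) - if a.2 = c.2 ∧ c.1 < a.1 then 1 else 0) := by
  rw [gridGraph_adj] at hab
  simp only [rayCrossing, Sym2.eq_iff, Prod.ext_iff]
  split_ifs <;> first | rfl | decide | omega

lemma winding_left_add_winding {x y : ℤ × ℤ} (p : gridGraph.Walk x y) (c : ℤ × ℤ) :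
    winding p (c.1 - 1, c.2) + winding p c = p.edges.count s(c, (c.1, c.2 + 1)) := by
  induction p with
  | nil => simp
  | cons hadj p ih =>
    rw [winding_cons, winding_cons, Walk.edges_cons, List.count_cons]
    push_cast
    simp only [beq_iff_eq]
    linear_combination rayCrossing_left_add_rayCrossing _ _ c + ih

/-- The rays are horizontal, so across a horizontal edge the two rays differ by a horizontal
half-line of lattice points; its contribution telescopes along the walk and cancels only for a
closed walk. -/
lemma winding_below_add_winding {x : ℤ × ℤ} (p : gridGraph.Walk x x) (c : ℤ × ℤ) :
    winding p (c.1, c.2 - 1) + winding p c = p.edges.count s(c, (c.1 + 1, c.2)) := by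
  let onRay : ℤ × ℤ → ZMod 2 := fun z => if z.2 = c.2 ∧ c.1 < z.1 then 1 else 0
  suffices ∀ {x y : ℤ × ℤ} (p : gridGraph.Walk x y), winding p (c.1, c.2 - 1) + winding p c =
      p.edges.count s(c, (c.1 + 1, c.2)) + (onRay y - onRay x) by
    simpa using this p
  intro x y p
  induction p with
  | nil => simp
  | cons hadj p ih =>
    rw [winding_cons, winding_cons, Walk.edges_cons, List.count_cons]
    push_cast
    simp only [beq_iff_eq]
    linear_combination rayCrossing_below_add_rayCrossing hadj c + ih

lemma winding_left_eq {x y : ℤ × ℤ} (p : gridGraph.Walk x y) {c : ℤ × ℤ}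
    (hc : c ∉ p.support) : winding p (c.1 - 1, c.2) = winding p c := by
  have := winding_left_add_winding p c
  rw [p.count_edges_eq_zero_of_notMem_support (Sym2.mem_mk_left _ _) hc, Nat.cast_zero] at this
  exact CharTwo.add_eq_zero.mp this

lemma winding_below_eq {x : ℤ × ℤ} (p : gridGraph.Walk x x) {c : ℤ × ℤ}
    (hc : c ∉ p.support) : winding p (c.1, c.2 - 1) = winding p c := by
  have := winding_below_add_winding p c
  rw [p.count_edges_eq_zero_of_notMem_support (Sym2.mem_mk_left _ _) hc, Nat.cast_zero] at this
  exact CharTwo.add_eq_zero.mp this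

lemma winding_eq_of_adj {x : ℤ × ℤ} (p : gridGraph.Walk x x) {c c' : ℤ × ℤ}
    (hcc' : gridGraph.Adj c c') (hc : c ∉ p.support) (hc' : c' ∉ p.support) :
    winding p c = winding p c' := by
  rw [gridGraph_adj] at hcc'
  obtain ⟨c1, c2⟩ := c
  obtain ⟨d1, d2⟩ := c'
  dsimp only at hcc'
  obtain ⟨rfl, rfl⟩ | ⟨rfl, rfl⟩ | ⟨rfl, rfl⟩ | ⟨rfl, rfl⟩ :
      (d1 = c1 - 1 ∧ d2 = c2) ∨ (c1 = d1 - 1 ∧ d2 = c2) ∨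
        (d1 = c1 ∧ d2 = c2 - 1) ∨ (d1 = c1 ∧ c2 = d2 - 1) := by omega
  · exact (winding_left_eq p hc).symm
  · exact winding_left_eq p hc'
  · exact (winding_below_eq p hc).symm
  · exact winding_below_eq p hc'

lemma winding_eq_of_reachable {x : ℤ × ℤ} (p : gridGraph.Walk x x) {S : Set (ℤ × ℤ)}
    (hS : ∀ v ∈ p.support, v ∉ S) {a b : S} (hab : (gridGraph.induce S).Reachable a b) :
    winding p a = winding p b := by
  obtain ⟨q⟩ := hab
  induction q with
  | nil => rfl
  | cons hadj _ ih =>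
    exact (winding_eq_of_adj p hadj (fun h => hS _ h (Subtype.prop _))
      (fun h => hS _ h (Subtype.prop _))).trans ih

lemma winding_eq_zero_of_forall_le {x y : ℤ × ℤ} (p : gridGraph.Walk x y) {c : ℤ × ℤ}
    (hp : ∀ v ∈ p.support, v.1 ≤ c.1) : winding p c = 0 := by
  induction p with
  | nil => rfl
  | cons hadj p ih =>
    rw [winding_cons, ih fun v hv => hp v (List.mem_cons_of_mem _ hv), add_zero, rayCrossing,
      if_neg]
    have := hp _ List.mem_cons_self
    omega

lemma winding_eq_of_corner {x : ℤ × ℤ} (p : gridGraph.Walk x x) {v c : ℤ × ℤ}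
    (hv : v ∉ p.support) (h1 : c.1 ≤ v.1) (h1' : v.1 ≤ c.1 + 1) (h2 : c.2 ≤ v.2)
    (h2' : v.2 ≤ c.2 + 1) : winding p c = winding p v := by
  obtain ⟨v1, v2⟩ := v
  obtain ⟨c1, c2⟩ := c
  dsimp only at *
  obtain ⟨rfl, rfl⟩ | ⟨rfl, rfl⟩ | ⟨rfl, rfl⟩ | ⟨rfl, rfl⟩ :
      (v1 = c1 ∧ v2 = c2) ∨ (v1 = c1 + 1 ∧ v2 = c2) ∨
        (v1 = c1 ∧ v2 = c2 + 1) ∨ (v1 = c1 + 1 ∧ v2 = c2 + 1) := by omega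
  · rfl
  · simpa using winding_left_eq p hv
  · simpa using winding_below_eq p hv
  · have hbelow := winding_below_add_winding p (c1, c2 + 1)
    rw [p.count_edges_eq_zero_of_notMem_support (Sym2.mem_mk_right _ _) hv, Nat.cast_zero] at hbelow
    have hleft : winding p (c1, c2 + 1) = winding p (c1 + 1, c2 + 1) := by
      simpa using winding_left_eq p hv
    simpa [hleft] using CharTwo.add_eq_zero.mp hbelow

lemma winding_eq_zero_of_notMem {R : Set (ℤ × ℤ)} (hR : R.Finite)
    (hRc : (gridGraph.induce Rᶜ).Preconnected) {x : ℤ × ℤ} (p : gridGraph.Walk x x)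
    (hp : ∀ v ∈ p.support, v ∈ R) {v : ℤ × ℤ} (hv : v ∉ R) : winding p v = 0 := by
  obtain ⟨M, hM⟩ := (hR.image Prod.fst).bddAbove
  have hle : ∀ z ∈ R, z.1 ≤ M := fun z hz => hM (Set.mem_image_of_mem _ hz)
  have hfar : ((M + 1, 0) : ℤ × ℤ) ∉ R := fun hmem => by linarith [hle _ hmem]
  calc winding p v = winding p (M + 1, 0) :=
        winding_eq_of_reachable p (S := Rᶜ) (fun z hz hzR => hzR (hp z hz))
          (hRc ⟨v, hv⟩ ⟨_, hfar⟩)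
    _ = 0 := winding_eq_zero_of_forall_le p fun z hz => by linarith [hle z (hp z hz)]

lemma winding_eq_zero_of_corner_notMem {R : Set (ℤ × ℤ)} (hR : R.Finite)
    (hRc : (gridGraph.induce Rᶜ).Preconnected) {x : ℤ × ℤ} (p : gridGraph.Walk x x)
    (hp : ∀ v ∈ p.support, v ∈ R) {v c : ℤ × ℤ} (hv : v ∉ R) (h1 : c.1 ≤ v.1)
    (h1' : v.1 ≤ c.1 + 1) (h2 : c.2 ≤ v.2) (h2' : v.2 ≤ c.2 + 1) : winding p c = 0 :=
  (winding_eq_of_corner p (fun hmem => hv (hp v hmem)) h1 h1' h2 h2').trans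
    (winding_eq_zero_of_notMem hR hRc p hp hv)


section Hall

variable {R : Set (ℤ × ℤ)} {h u u' : ℤ × ℤ}

lemma adj_of_nbrsIn_eq (hnbrs : nbrsIn R h = {u, u'}) : gridGraph.Adj h u ∧ gridGraph.Adj h u' :=
  ⟨(hnbrs ▸ Set.mem_insert u {u'} : u ∈ nbrsIn R h).2,
    (hnbrs ▸ Set.mem_insert_of_mem u rfl : u' ∈ nbrsIn R h).2⟩

lemma eq_or_eq_of_nbrsIn_eq (hnbrs : nbrsIn R h = {u, u'}) {z : ℤ × ℤ} (hz : z ∈ R)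
    (hhz : gridGraph.Adj h z) : z = u ∨ z = u' := by
  have hmem : z ∈ nbrsIn R h := ⟨hz, hhz⟩
  rwa [hnbrs] at hmem

lemma notMem_or_notMem_of_hall (hhR : h ∈ R) (hnbrs : nbrsIn R h = {u, u'}) {w : ℤ × ℤ}
    (hwR : w ∉ R) (hwu : gridGraph.Adj u w) (hwu' : gridGraph.Adj u' w) (hhu : u.2 = h.2)
    {d : ℤ} (hd : d.natAbs = 1) : (h.1, h.2 + d) ∉ R ∨ (u.1, h.2 + d) ∉ R := by
  by_contra! ⟨hmem, hmem'⟩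
  have hhd : gridGraph.Adj h (h.1, h.2 + d) := by rw [gridGraph_adj]; omega
  have hwh : w ≠ h := fun e => hwR (e ▸ hhR)
  have hhu_adj := (adj_of_nbrsIn_eq hnbrs).1
  rw [ne_eq, Prod.ext_iff, not_and_or] at hwh
  rw [gridGraph_adj] at hwu hwu' hhu_adj
  rcases eq_or_eq_of_nbrsIn_eq hnbrs hmem hhd with hd_eq | hd_eq <;>
    simp only [Prod.ext_iff] at hd_eq
  · omega
  · have hw : w = (u.1, h.2 + d) := by ext <;> dsimp only <;> omega
    exact hwR (hw ▸ hmem')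

lemma snd_eq_or_snd_eq_of_hall (hhR : h ∈ R) (hne : u ≠ u') (hnbrs : nbrsIn R h = {u, u'})
    (hdiag : ∃ w : ℤ × ℤ, w ∉ R ∧ gridGraph.Adj u w ∧ gridGraph.Adj u' w) :
    u.2 = h.2 ∨ u'.2 = h.2 := by
  obtain ⟨w, hwR, hwu, hwu'⟩ := hdiag
  obtain ⟨hhu, hhu'⟩ := adj_of_nbrsIn_eq hnbrs
  have hwh : w ≠ h := fun e => hwR (e ▸ hhR)
  rw [ne_eq, Prod.ext_iff, not_and_or] at hwh hne
  rw [gridGraph_adj] at hwu hwu' hhu hhu'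
  omega

lemma not_reachable_of_hall_of_snd_eq (hR : R.Finite) (hRc : (gridGraph.induce Rᶜ).Preconnected)
    (hhR : h ∈ R) (hne : u ≠ u') (hnbrs : nbrsIn R h = {u, u'})
    (hdiag : ∃ w : ℤ × ℤ, w ∉ R ∧ gridGraph.Adj u w ∧ gridGraph.Adj u' w)
    (hu : u ∈ R \ {h}) (hu' : u' ∈ R \ {h}) (hhu : u.2 = h.2) :
    ¬ (gridGraph.induce (R \ {h})).Reachable ⟨u, hu⟩ ⟨u', hu'⟩ := by
  intro hr
  obtain ⟨w, hwR, hwu, hwu'⟩ := hdiag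
  obtain ⟨q, hq⟩ := hr.exists_walk_of_induce
  have hhq : h ∉ q.support := fun hmem => (hq h hmem).2 rfl
  obtain ⟨hhu_adj, hhu'_adj⟩ := adj_of_nbrsIn_eq hnbrs
  let γ := Walk.cons hhu_adj (q.concat hhu'_adj.symm)
  have hγR : ∀ v ∈ γ.support, v ∈ R := by
    simp only [γ, Walk.support_cons, Walk.support_concat, List.mem_cons, List.mem_append,
      List.not_mem_nil, or_false]
    rintro v (rfl | hv | rfl)
    exacts [hhR, (hq v hv).1, hhR]
  have hu1 : u.1 = h.1 + 1 ∨ u.1 = h.1 - 1 := by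
    rw [gridGraph_adj] at hhu_adj
    omega
  let c : ℤ × ℤ := (min h.1 u.1, h.2)
  have hedge : s(h, u) = s(c, (c.1 + 1, c.2)) := by
    simp only [c, Sym2.eq_iff, Prod.ext_iff, and_true]
    omega
  have hsum := winding_below_add_winding γ c
  rw [← hedge, Walk.count_edges_cons_concat hhu_adj hhu'_adj.symm q hhq hne] at hsum
  -- the cell between the rows `h.2` and `h.2 + d`
  have hcell : ∀ d : ℤ, d.natAbs = 1 → winding γ (c.1, c.2 + min d 0) = 0 := by
    intro d hd
    rcases notMem_or_notMem_of_hall hhR hnbrs hwR hwu hwu' hhu hd with hv | hv <;>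
      exact winding_eq_zero_of_corner_notMem hR hRc γ hγR hv
        (by dsimp only [c]; omega) (by dsimp only [c]; omega)
        (by dsimp only [c]; omega) (by dsimp only [c]; omega)
  have habove : winding γ c = 0 := by simpa using hcell 1 rfl
  have hbelow : winding γ (c.1, c.2 - 1) = 0 := by simpa [sub_eq_add_neg] using hcell (-1) rfl
  rw [habove, hbelow] at hsum
  exact absurd hsum (by decide)

end Hall

end GridWinding

/-- A hall of a finite simply connected region is an articulation point: its two neighbors
`u` and `u'` in `R` are not connected by any path in the subgraph induced on `R \ {h}`. -/
theorem hall_is_articulation_point (R : Set (ℤ × ℤ)) (hfin : R.Finite)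
    (hsc : SimplyConnected R) (h u u' : ℤ × ℤ) (hhR : h ∈ R) (hne : u ≠ u')
    (hnbrs : nbrsIn R h = {u, u'})
    (hdiag : ∃ w : ℤ × ℤ, w ∉ R ∧ gridGraph.Adj u w ∧ gridGraph.Adj u' w)
    (hu : u ∈ R \ {h}) (hu' : u' ∈ R \ {h}) :
    ¬ (gridGraph.induce (R \ {h})).Reachable ⟨u, hu⟩ ⟨u', hu'⟩ := by
  have hRc := hsc.2.preconnected
  rcases GridWinding.snd_eq_or_snd_eq_of_hall hhR hne hnbrs hdiag with hhu | hhu'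
  · exact GridWinding.not_reachable_of_hall_of_snd_eq hfin hRc hhR hne hnbrs hdiag hu hu' hhu
  · rw [Set.pair_comm] at hnbrs
    exact fun hr => GridWinding.not_reachable_of_hall_of_snd_eq hfin hRc hhR hne.symm hnbrs
      (hdiag.imp fun _ ⟨hwR, hwu, hwu'⟩ => ⟨hwR, hwu', hwu⟩) hu' hu hhu' hr.symm
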